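/- arXiv:1901.03619 — 4 statements merged into one kernel-verified Lean document; each statement's English description precedes it below -/
import Mathlib

section
/- Let C ⊆ ℝ^n, let f : ℝ^n → ℝ be bounded above on C, and let sequences (x^(k))_{k≥0} in C and (d^(k))_{k≥0} in ℝ^n satisfy: (i) each d^(k) is a subgradient of f at x^(k), i.e., f(y) ≥ f(x^(k)) + ⟨d^(k), y − x^(k)⟩ for all y ∈ ℝ^n; and (ii) x^(k+1) maximizes the linear functional ⟨·, d^(k)⟩ over C, i.e., x^(k+1) ∈ C and ⟨z, d^(k)⟩ ≤ ⟨x^(k+1), d^(k)⟩ for all z ∈ C. Then the sequence (f(x^(k)))_{k≥0} is non-decreasing and convergent, and for every ε > 0 there exists k ≥ 1 such that f(x^(k)) − f(x^(k−1)) < ε. -/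
/-!
The subgradient inequality at `x k`, evaluated at `x (k+1)`, gives
`f (x (k+1)) ≥ f (x k) + ⟪d k, x (k+1) - x k⟫`, and the last term is nonnegative because
`x (k+1)` maximizes `⟪·, d k⟫` over `C ∋ x k`. So `f ∘ x` is non-decreasing; being bounded above
by the bound of `f` on `C`, it converges, hence is Cauchy, and its increments eventually drop
below any `ε > 0`.
-/

open Filter Topology
open scoped RealInnerProductSpace

section SubgradientAscent

variable {E : Type*} [NormedAddCommGroup E] [InnerProductSpace ℝ E]

theorem le_of_add_inner_sub_le_of_inner_le {f : E → ℝ} {x x' d : E}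
    (hsub : f x' ≥ f x + ⟪d, x' - x⟫) (hle : ⟪x, d⟫ ≤ ⟪x', d⟫) : f x ≤ f x' := by
  rw [real_inner_comm d x, real_inner_comm d x'] at hle
  rw [inner_sub_right] at hsub
  linarith

theorem monotone_comp_of_subgradient_of_maximizes_inner {C : Set E} {f : E → ℝ} {x d : ℕ → E}
    (hxC : ∀ k, x k ∈ C) (hsub : ∀ k y, f y ≥ f (x k) + ⟪d k, y - x k⟫)
    (hmax : ∀ k, ∀ z ∈ C, ⟪z, d k⟫ ≤ ⟪x (k + 1), d k⟫) : Monotone (f ∘ x) :=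
  monotone_nat_of_le_succ fun k =>
    le_of_add_inner_sub_le_of_inner_le (f := f) (hsub k (x (k + 1))) (hmax k (x k) (hxC k))

end SubgradientAscent

theorem Filter.Tendsto.exists_succ_sub_lt {u : ℕ → ℝ} {L : ℝ} (hu : Tendsto u atTop (𝓝 L))
    {ε : ℝ} (hε : 0 < ε) : ∃ k, u (k + 1) - u k < ε := by
  obtain ⟨N, hN⟩ := Metric.cauchySeq_iff'.1 hu.cauchySeq ε hε
  exact ⟨N, (le_abs_self _).trans_lt (hN (N + 1) N.le_succ)⟩

/-- monotonicity, convergence, and finite termination (Theorem 3 / Theorem 1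
of the paper) of the subgradient-based minorize–maximize iteration: if `f` is bounded
above on `C`, each `d k` is a subgradient of `f` at `x k`, and `x (k+1)` maximizes
`⟨·, d k⟩` over `C`, then `f (x k)` is non-decreasing and convergent, and for every
`ε > 0` some consecutive increment is below `ε`. -/
theorem stmt_5 {n : ℕ} (C : Set (EuclideanSpace ℝ (Fin n)))
    (f : EuclideanSpace ℝ (Fin n) → ℝ) (hbdd : BddAbove (f '' C))
    (x d : ℕ → EuclideanSpace ℝ (Fin n))
    (hxC : ∀ k, x k ∈ C)
    (hsub : ∀ k, ∀ y : EuclideanSpace ℝ (Fin n), f y ≥ f (x k) + ⟪d k, y - x k⟫)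
    (hmax : ∀ k, ∀ z ∈ C, ⟪z, d k⟫ ≤ ⟪x (k + 1), d k⟫) :
    Monotone (fun k => f (x k)) ∧
      (∃ L : ℝ, Filter.Tendsto (fun k => f (x k)) Filter.atTop (nhds L)) ∧
      ∀ ε > (0 : ℝ), ∃ k ≥ 1, f (x k) - f (x (k - 1)) < ε := by
  have hmono : Monotone (f ∘ x) := monotone_comp_of_subgradient_of_maximizes_inner hxC hsub hmax
  have hbdd_range : BddAbove (Set.range (f ∘ x)) := by
    rw [Set.range_comp]
    exact hbdd.mono (Set.image_mono (Set.range_subset_iff.2 hxC))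
  have hlim := tendsto_atTop_ciSup hmono hbdd_range
  refine ⟨hmono, ⟨_, hlim⟩, fun ε hε => ?_⟩
  obtain ⟨k, hk⟩ := hlim.exists_succ_sub_lt hε
  exact ⟨k + 1, Nat.le_add_left 1 k, hk⟩
end

section
/- Let C ⊆ ℝ^n, let f : ℝ^n → ℝ be bounded above on C, and let sequences (x^(k))_{k≥0} in C and (d^(k))_{k≥0} in ℝ^n satisfy: (i) each d^(k) is a subgradient of f at x^(k), i.e., f(y) ≥ f(x^(k)) + ⟨d^(k), y − x^(k)⟩ for all y ∈ ℝ^n; and (ii) x^(k+1) maximizes the linear functional ⟨·, d^(k)⟩ over C, i.e., x^(k+1) ∈ C and ⟨z, d^(k)⟩ ≤ ⟨x^(k+1), d^(k)⟩ for all z ∈ C. Then lim_{k→∞} ⟨x^(k+1) − x^(k), d^(k)⟩ = 0; equivalently, since x^(k+1) attains the supremum, the sequence sup_{z∈C} ⟨z − x^(k), d^(k)⟩ converges to 0. -/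
/-!
By the subgradient inequality at `x k`, the gap `⟪x (k + 1) - x k, d k⟫` is at most
`f (x (k + 1)) - f (x k)`, and it is nonnegative because `x (k + 1)` maximizes `⟪·, d k⟫`
over `C ∋ x k`. Hence `f ∘ x` is nondecreasing and bounded above, so it converges and its
increments, which squeeze the gap, tend to `0`. The supremum in the second claim is attained
at `x (k + 1)`, so it equals the gap.
-/

open scoped RealInnerProductSpace
open Filter Topology

theorem tendsto_zero_of_nonneg_of_le_succ_sub {a u : ℕ → ℝ} (ha : ∀ k, 0 ≤ a k)
    (hau : ∀ k, a k ≤ u (k + 1) - u k) (hu : BddAbove (Set.range u)) :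
    Tendsto a atTop (𝓝 0) := by
  have hmono : Monotone u :=
    monotone_nat_of_le_succ fun k => by linarith [ha k, hau k]
  have hlim := tendsto_atTop_ciSup hmono hu
  have hincr : Tendsto (fun k => u (k + 1) - u k) atTop (𝓝 0) := by
    simpa using (hlim.comp (tendsto_add_atTop_nat 1)).sub hlim
  exact tendsto_of_tendsto_of_tendsto_of_le_of_le tendsto_const_nhds hincr ha hau

section InnerProduct

variable {E : Type*} [NormedAddCommGroup E] [InnerProductSpace ℝ E]

theorem inner_sub_le_sub_of_subgradient {f : E → ℝ} {x y d : E}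
    (hsub : ∀ z, f z ≥ f x + ⟪d, z - x⟫) : ⟪y - x, d⟫ ≤ f y - f x := by
  linarith [hsub y, real_inner_comm d (y - x)]

theorem inner_sub_nonneg_of_forall_inner_le {C : Set E} {x y d : E} (hx : x ∈ C)
    (hmax : ∀ z ∈ C, ⟪z, d⟫ ≤ ⟪y, d⟫) : 0 ≤ ⟪y - x, d⟫ := by
  rw [inner_sub_left]
  linarith [hmax x hx]

theorem sSup_image_inner_sub_eq_of_forall_inner_le {C : Set E} {x y d : E} (hy : y ∈ C)
    (hmax : ∀ z ∈ C, ⟪z, d⟫ ≤ ⟪y, d⟫) :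
    sSup ((fun z => ⟪z - x, d⟫) '' C) = ⟪y - x, d⟫ := by
  refine IsGreatest.csSup_eq ⟨⟨y, hy, rfl⟩, ?_⟩
  rintro _ ⟨z, hz, rfl⟩
  simp only [inner_sub_left]
  linarith [hmax z hz]

end InnerProduct

/-- the limiting stationarity claim of Theorem 3 (and Theorem 1) of the
paper: along the subgradient-based minorize–maximize iteration,
`⟨x^(k+1) − x^(k), d^(k)⟩ → 0`; equivalently, since `x^(k+1)` attains the supremum,
`sup_{z ∈ C} ⟨z − x^(k), d^(k)⟩ → 0`. -/
theorem stmt_6 {n : ℕ} (C : Set (EuclideanSpace ℝ (Fin n)))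
    (f : EuclideanSpace ℝ (Fin n) → ℝ) (hbdd : BddAbove (f '' C))
    (x d : ℕ → EuclideanSpace ℝ (Fin n))
    (hxC : ∀ k, x k ∈ C)
    (hsub : ∀ k, ∀ y : EuclideanSpace ℝ (Fin n), f y ≥ f (x k) + ⟪d k, y - x k⟫)
    (hmax : ∀ k, ∀ z ∈ C, ⟪z, d k⟫ ≤ ⟪x (k + 1), d k⟫) :
    Filter.Tendsto (fun k => (⟪x (k + 1) - x k, d k⟫ : ℝ)) Filter.atTop (nhds 0) ∧
      Filter.Tendsto (fun k => sSup ((fun z => (⟪z - x k, d k⟫ : ℝ)) '' C))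
        Filter.atTop (nhds 0) := by
  have hgap : Tendsto (fun k => ⟪x (k + 1) - x k, d k⟫) atTop (𝓝 0) :=
    tendsto_zero_of_nonneg_of_le_succ_sub (u := fun k => f (x k))
      (fun k => inner_sub_nonneg_of_forall_inner_le (hxC k) (hmax k))
      (fun k => inner_sub_le_sub_of_subgradient (hsub k))
      (hbdd.mono (Set.range_subset_iff.2 fun k => Set.mem_image_of_mem f (hxC k)))
  refine ⟨hgap, ?_⟩
  simpa only [sSup_image_inner_sub_eq_of_forall_inner_le (hxC (_ + 1)) (hmax _)] using hgap
end

section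
/- Let E be a real inner product space, C ⊆ E, f : E → ℝ, x ∈ C, and let d be a subgradient of f at x, i.e., f(y) ≥ f(x) + ⟨d, y − x⟩ for all y ∈ E. Suppose x′ ∈ C satisfies ⟨z, d⟩ ≤ ⟨x′, d⟩ for all z ∈ C, and suppose f(x′) = f(x). Then ⟨z − x, d⟩ ≤ 0 for all z ∈ C; that is, x satisfies the first-order necessary optimality condition for maximizing f over C. -/
open scoped RealInnerProductSpace

/-- if the linear maximization along a subgradient direction yields no
improvement in objective value, then the current point satisfies the first-order
necessary optimality condition `⟨z − x, d⟩ ≤ 0` on the feasible set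
(remark following Theorem 3 of the paper). -/
theorem stmt_7 {E : Type*} [NormedAddCommGroup E] [InnerProductSpace ℝ E]
    (C : Set E) (f : E → ℝ) (x : E) (hx : x ∈ C) (d : E)
    (hd : ∀ y : E, f y ≥ f x + ⟪d, y - x⟫)
    (x' : E) (hx' : x' ∈ C) (hmax : ∀ z ∈ C, ⟪z, d⟫ ≤ ⟪x', d⟫)
    (heq : f x' = f x) :
    ∀ z ∈ C, ⟪z - x, d⟫ ≤ (0 : ℝ) := by
  intro z hz
  have h1 : ⟪d, x' - x⟫ ≤ 0 := by
    have := hd x'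
    rw [heq] at this
    linarith
  have h2 : ⟪z, d⟫ ≤ ⟪x', d⟫ := hmax z hz
  have h3 : ⟪z - x, d⟫ = ⟪z, d⟫ - ⟪x, d⟫ := by
    rw [inner_sub_left]
  have h4 : ⟪d, x' - x⟫ = ⟪x', d⟫ - ⟪x, d⟫ := by
    rw [real_inner_comm, inner_sub_left]
  linarith
end

section
/- Given vectors φ_1,…,φ_N ∈ ℝ^K and scalars b_1,…,b_N ∈ ℝ, define f_pwm : ℝ^K → ℝ by f_pwm(α) = (1/N) ∑_{i=1}^N max(⟨φ_i, α⟩, b_i). Let C ⊆ ℝ^K be such that f_pwm is bounded above on C, let α^(0) ∈ C, and for each k ≥ 0 define d^(k) = (1/N) ∑_{i ∈ I(α^(k))} φ_i where I(α) = {i : ⟨φ_i, α⟩ ≥ b_i}, and suppose α^(k+1) ∈ C satisfies ⟨z, d^(k)⟩ ≤ ⟨α^(k+1), d^(k)⟩ for all z ∈ C. Then: (a) the sequence (f_pwm(α^(k)))_{k≥0} is non-decreasing and convergent; (b) for every ε > 0 there exists k ≥ 1 with f_pwm(α^(k)) − f_pwm(α^(k−1)) < ε; and (c) lim_{k→∞}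 ⟨α^(k+1) − α^(k), d^(k)⟩ = 0. -/
/-!
Each term `max ⟪φ i, ·⟫ (b i)` dominates both `⟪φ i, ·⟫` and `b i`, and at `x` equals the
active one of the two, so `dsub φ b x` is a subgradient of `fpwm φ b` at `x`:
`fpwm x + ⟪y - x, dsub x⟫ ≤ fpwm y`. Since `α k ∈ C` and `α (k + 1)` maximises `⟪·, dsub (α k)⟫`
over `C`, the linearised gain `⟪α (k + 1) - α k, dsub (α k)⟫` is nonnegative and at most the
increase of the objective. Hence the objective values increase, converge because they are
bounded above on `C`, and both their increments and the linearised gains tend to `0`.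
-/

open scoped RealInnerProductSpace

/-- The sampled point-wise maximum objective of the paper. -/
noncomputable def fpwm {K N : ℕ} (φ : Fin N → EuclideanSpace ℝ (Fin K)) (b : Fin N → ℝ)
    (α : EuclideanSpace ℝ (Fin K)) : ℝ :=
  (1 / (N : ℝ)) * ∑ i, max ⟪φ i, α⟫ (b i)

/-- The explicit upper-subgradient of `fpwm` at `α` (equation (7) of the paper). -/
noncomputable def dsub {K N : ℕ} (φ : Fin N → EuclideanSpace ℝ (Fin K)) (b : Fin N → ℝ)
    (α : EuclideanSpace ℝ (Fin K)) : EuclideanSpace ℝ (Fin K) :=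
  (1 / (N : ℝ)) • ∑ i ∈ Finset.univ.filter (fun i => b i ≤ ⟪φ i, α⟫), φ i

open Filter Topology

lemma max_add_ite_sub_le_max (a a' c : ℝ) :
    max a c + (if c ≤ a then a' - a else 0) ≤ max a' c := by
  split_ifs with h
  · rw [max_eq_left h]
    linarith [le_max_left a' c]
  · rw [max_eq_right (not_le.mp h).le, add_zero]
    exact le_max_right a' c

lemma inner_sub_dsub {K N : ℕ} (φ : Fin N → EuclideanSpace ℝ (Fin K)) (b : Fin N → ℝ)
    (x y : EuclideanSpace ℝ (Fin K)) :
    ⟪y - x, dsub φ b x⟫ =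
      (1 / (N : ℝ)) * ∑ i, if b i ≤ ⟪φ i, x⟫ then ⟪φ i, y⟫ - ⟪φ i, x⟫ else 0 := by
  rw [dsub, real_inner_smul_right, inner_sum, ← Finset.sum_filter]
  congr 1
  refine Finset.sum_congr rfl fun i _ => ?_
  rw [inner_sub_left, real_inner_comm y, real_inner_comm x]

lemma fpwm_add_inner_sub_dsub_le {K N : ℕ} (φ : Fin N → EuclideanSpace ℝ (Fin K))
    (b : Fin N → ℝ) (x y : EuclideanSpace ℝ (Fin K)) :
    fpwm φ b x + ⟪y - x, dsub φ b x⟫ ≤ fpwm φ b y := by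
  rw [inner_sub_dsub, fpwm, fpwm, ← mul_add, ← Finset.sum_add_distrib]
  gcongr with i
  exact max_add_ite_sub_le_max _ _ _

lemma tendsto_sub_succ_zero {G : Type*} [TopologicalSpace G] [AddCommGroup G]
    [IsTopologicalAddGroup G] {u : ℕ → G} {L : G}
    (hu : Tendsto u atTop (𝓝 L)) :
    Tendsto (fun k => u (k + 1) - u k) atTop (𝓝 0) := by
  simpa using ((tendsto_add_atTop_iff_nat 1).mpr hu).sub hu

section LinearizedAscent

variable {E : Type*} [NormedAddCommGroup E] [InnerProductSpace ℝ E]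
  {f : E → ℝ} {d : E → E} {C : Set E} {α : ℕ → E}

lemma linearizedGain_nonneg {x y v : E} (hx : x ∈ C) (hy : ∀ z ∈ C, ⟪z, v⟫ ≤ ⟪y, v⟫) :
    0 ≤ ⟪y - x, v⟫ := by
  rw [inner_sub_left, sub_nonneg]
  exact hy x hx

lemma monotone_of_linearizedAscent (hsub : ∀ x y, f x + ⟪y - x, d x⟫ ≤ f y)
    (hmem : ∀ k, α k ∈ C) (hmax : ∀ k, ∀ z ∈ C, ⟪z, d (α k)⟫ ≤ ⟪α (k + 1), d (α k)⟫) :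
    Monotone fun k => f (α k) :=
  monotone_nat_of_le_succ fun k => by
    linarith [hsub (α k) (α (k + 1)), linearizedGain_nonneg (hmem k) (hmax k)]

lemma tendsto_linearizedGain_zero (hsub : ∀ x y, f x + ⟪y - x, d x⟫ ≤ f y)
    (hmem : ∀ k, α k ∈ C) (hmax : ∀ k, ∀ z ∈ C, ⟪z, d (α k)⟫ ≤ ⟪α (k + 1), d (α k)⟫)
    {L : ℝ} (hconv : Tendsto (fun k => f (α k)) atTop (𝓝 L)) :
    Tendsto (fun k => ⟪α (k + 1) - α k, d (α k)⟫) atTop (𝓝 0) :=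
  squeeze_zero (fun k => linearizedGain_nonneg (hmem k) (hmax k))
    (fun k => by linarith [hsub (α k) (α (k + 1))]) (tendsto_sub_succ_zero hconv)

end LinearizedAscent

/-- Theorem 1 of the paper combined with the explicit subgradient formula:
Algorithm 1 applied to `fpwm` over a feasible set `C` on which `fpwm` is bounded above
produces (a) a non-decreasing convergent objective sequence, (b) terminates in finitely
many iterations for any tolerance `ε > 0`, and (c) satisfies the first-order necessary
optimality condition in the limit. -/
theorem stmt_8 {K N : ℕ} (φ : Fin N → EuclideanSpace ℝ (Fin K)) (b : Fin N → ℝ)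
    (C : Set (EuclideanSpace ℝ (Fin K)))
    (hbdd : BddAbove (fpwm φ b '' C))
    (α : ℕ → EuclideanSpace ℝ (Fin K))
    (hα0 : α 0 ∈ C)
    (hstep : ∀ k : ℕ, α (k + 1) ∈ C ∧
      ∀ z ∈ C, ⟪z, dsub φ b (α k)⟫ ≤ ⟪α (k + 1), dsub φ b (α k)⟫) :
    Monotone (fun k => fpwm φ b (α k)) ∧
      (∃ L : ℝ, Filter.Tendsto (fun k => fpwm φ b (α k)) Filter.atTop (nhds L)) ∧
      (∀ ε > (0 : ℝ), ∃ k ≥ 1, fpwm φ b (α k) - fpwm φ b (α (k - 1)) < ε) ∧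
      Filter.Tendsto (fun k => (⟪α (k + 1) - α k, dsub φ b (α k)⟫ : ℝ))
        Filter.atTop (nhds 0) := by
  have hmem : ∀ k, α k ∈ C := by
    rintro (_ | k)
    exacts [hα0, (hstep k).1]
  have hmax := fun k => (hstep k).2
  have hsub := fpwm_add_inner_sub_dsub_le φ b
  have hmono := monotone_of_linearizedAscent hsub hmem hmax
  have hconv := tendsto_atTop_ciSup hmono
    (hbdd.mono (Set.range_subset_iff.mpr fun k => Set.mem_image_of_mem _ (hmem k)))
  refine ⟨hmono, ⟨_, hconv⟩, fun ε hε => ?_, tendsto_linearizedGain_zero hsub hmem hmax hconv⟩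
  obtain ⟨k, hk⟩ := ((tendsto_sub_succ_zero hconv).eventually_lt_const hε).exists
  exact ⟨k + 1, Nat.le_add_left 1 k, by simpa using hk⟩
end
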